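/- For any tree t over {a,b}, the unique run of the deterministic parity automaton A_L (states l₁ of rank 1, l₀ of rank 0, ⊤₀ all-accepting of rank 0; transitions: on a from l-states go to (l₁, l₀), on b go to (⊤₀, ⊤₀); initial state l₁) has a branch on which rank 1 occurs infinitely often if and only if t has an all-a branch turning left infinitely often; hence A_L recognizes exactly the complement L of G. -/

import Mathlib

/-- Infinite binary trees over {a,b}; `true` = a, `false` = b. -/
abbrev Tree2 := List (Fin 2) → Bool

/-- The length-`n` prefix of a branch. -/
def pre (β : ℕ → Fin 2) (n : ℕ) : List (Fin 2) := List.ofFn (fun i : Fin n => β i)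

/-- A branch is good: all its finite prefixes are labelled `a` and it turns left (0)
infinitely often. -/
def Good (t : Tree2) (β : ℕ → Fin 2) : Prop :=
  (∀ n, t (pre β n) = true) ∧ (∀ m, ∃ n ≥ m, β n = 0)

/-- `β` is strictly to the left of `γ`. -/
def LeftOf (β γ : ℕ → Fin 2) : Prop :=
  ∃ n, (∀ i < n, β i = γ i) ∧ β n = 0 ∧ γ n = 1

/-- A branch passes through a node. -/
def Through (γ : ℕ → Fin 2) (v : List (Fin 2)) : Prop := pre γ v.length = v

/-- The set of trees that have a good branch. -/
def G : Set Tree2 := {t | ∃ β, Good t β}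

/-- `r` occurs infinitely often in the sequence `g`. -/
def InfOften (g : ℕ → ℕ) (r : ℕ) : Prop := ∀ m, ∃ n ≥ m, g n = r

/-- Parity condition: the maximal value occurring infinitely often is even. -/
def ParityOk (g : ℕ → ℕ) : Prop :=
  ∃ r, Even r ∧ InfOften g r ∧ ∀ r', InfOften g r' → r' ≤ r

/-- States of the deterministic automaton `A_L`. -/
inductive QL | l1 | l0 | top0
deriving DecidableEq

def rankL : QL → ℕ
  | .l1 => 1
  | .l0 => 0
  | .top0 => 0

/-- Transition function of `A_L`: on `a` the l-states go to `(l₁, l₀)`, on `b`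
to `(⊤₀, ⊤₀)`; `⊤₀` is all-accepting. -/
def deltaL : QL → Bool → QL × QL
  | .top0, _ => (.top0, .top0)
  | _, true => (.l1, .l0)
  | _, false => (.top0, .top0)

def childL (d : Fin 2) (p : QL × QL) : QL := if d = 0 then p.1 else p.2

def subt (t : Tree2) (d : Fin 2) : Tree2 := fun w => t (d :: w)

/-- The state of the unique run of `A_L` started in `q` at a node of `t`. -/
def runL (q : QL) (t : Tree2) : List (Fin 2) → QL
  | [] => q
  | d :: v => runL (childL d (deltaL q (t []))) (subt t d) v

/-
The run of `A_L` leaves the `l`-states for good as soon as it reads a `b`, and while it stays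
there its state is `l₁` exactly at the nodes reached by a left turn. So along a branch `β`,
rank 1 occurs infinitely often iff every node of `β` is labelled `a` and `β` turns left
infinitely often, i.e. iff `β` is good. Since all ranks are at most 1, the parity condition
on a branch holds iff rank 1 occurs only finitely often.
-/

lemma childL_deltaL_ne_top0_iff (d : Fin 2) (q : QL) (b : Bool) :
    childL d (deltaL q b) ≠ .top0 ↔ q ≠ .top0 ∧ b = true := by
  fin_cases d <;> cases q <;> cases b <;> decide

lemma rankL_childL_deltaL_eq_one_iff (d : Fin 2) (q : QL) (b : Bool) :
    rankL (childL d (deltaL q b)) = 1 ↔ q ≠ .top0 ∧ b = true ∧ d = 0 := by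
  fin_cases d <;> cases q <;> cases b <;> decide

lemma rankL_le_one (q : QL) : rankL q ≤ 1 := by
  cases q <;> simp [rankL]

lemma runL_append_singleton (q : QL) (t : Tree2) (v : List (Fin 2)) (d : Fin 2) :
    runL q t (v ++ [d]) = childL d (deltaL (runL q t v) (t v)) := by
  induction v generalizing q t with
  | nil => rfl
  | cons e v ih => exact ih _ _

lemma pre_succ (β : ℕ → Fin 2) (n : ℕ) : pre β (n + 1) = pre β n ++ [β n] := by
  simp only [pre, List.ofFn_succ', List.concat_eq_append]; rfl

lemma runL_pre_succ (q : QL) (t : Tree2) (β : ℕ → Fin 2) (n : ℕ) :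
    runL q t (pre β (n + 1)) = childL (β n) (deltaL (runL q t (pre β n)) (t (pre β n))) := by
  rw [pre_succ, runL_append_singleton]

lemma runL_pre_ne_top0_iff {q : QL} (hq : q ≠ .top0) (t : Tree2) (β : ℕ → Fin 2) (n : ℕ) :
    runL q t (pre β n) ≠ .top0 ↔ ∀ k < n, t (pre β k) = true := by
  induction n with
  | zero => simpa [pre, runL] using hq
  | succ n ih =>
    rw [runL_pre_succ, childL_deltaL_ne_top0_iff, ih]
    simp only [Nat.lt_succ_iff_lt_or_eq, or_imp, forall_and, forall_eq]

lemma rankL_runL_pre_succ_eq_one_iff {q : QL} (hq : q ≠ .top0) (t : Tree2) (β : ℕ → Fin 2)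
    (n : ℕ) :
    rankL (runL q t (pre β (n + 1))) = 1 ↔ (∀ k ≤ n, t (pre β k) = true) ∧ β n = 0 := by
  rw [runL_pre_succ, rankL_childL_deltaL_eq_one_iff, runL_pre_ne_top0_iff hq]
  simp only [Nat.le_iff_lt_or_eq, or_imp, forall_and, forall_eq, and_assoc]

lemma infOften_rankL_runL_iff_good {q : QL} (hq : q ≠ .top0) (t : Tree2) (β : ℕ → Fin 2) :
    InfOften (fun n => rankL (runL q t (pre β n))) 1 ↔ Good t β := by
  constructor
  · intro h
    refine ⟨fun n => ?_, fun m => ?_⟩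
    · obtain ⟨_ | k, hk, hrank⟩ := h (n + 1)
      · omega
      exact ((rankL_runL_pre_succ_eq_one_iff hq t β k).1 hrank).1 n (by omega)
    · obtain ⟨_ | k, hk, hrank⟩ := h (m + 1)
      · omega
      exact ⟨k, by omega, ((rankL_runL_pre_succ_eq_one_iff hq t β k).1 hrank).2⟩
  · rintro ⟨hlabel, hleft⟩ m
    obtain ⟨n, hn, hβ⟩ := hleft m
    exact ⟨n + 1, by omega, (rankL_runL_pre_succ_eq_one_iff hq t β n).2 ⟨fun k _ => hlabel k, hβ⟩⟩

lemma InfOften.le_of_forall_le {g : ℕ → ℕ} {r B : ℕ} (h : InfOften g r) (hg : ∀ n, g n ≤ B) : r ≤ B := by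
  obtain ⟨n, -, rfl⟩ := h 0
  exact hg n

lemma parityOk_iff_not_infOften_one {g : ℕ → ℕ} (hg : ∀ n, g n ≤ 1) :
    ParityOk g ↔ ¬ InfOften g 1 := by
  constructor
  · rintro ⟨r, hr_even, hr, hr_max⟩ h1
    have := hr_max 1 h1
    have := hr.le_of_forall_le hg
    rcases hr_even with ⟨k, rfl⟩
    omega
  · intro h1
    obtain ⟨m, hm⟩ : ∃ m, ∀ n ≥ m, g n ≠ 1 := by simpa [InfOften] using h1
    have hzero : ∀ n ≥ m, g n = 0 := fun n hn => by have := hg n; have := hm n hn; omega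
    refine ⟨0, Even.zero, fun k => ⟨max m k, le_max_right _ _, hzero _ (le_max_left _ _)⟩, ?_⟩
    intro r hr
    obtain ⟨n, hn, rfl⟩ := hr m
    exact (hzero n hn).le

/-- The unique run of `A_L` (initial state `l₁`) has a branch on which rank 1 occurs
infinitely often iff `t` has a good branch; hence `A_L` recognizes the complement of `G`. -/
theorem AL_recognizes_L (t : Tree2) :
    ((∃ β : ℕ → Fin 2, InfOften (fun n => rankL (runL QL.l1 t (pre β n))) 1)
        ↔ ∃ β, Good t β) ∧
    ((∀ β : ℕ → Fin 2, ParityOk (fun n => rankL (runL QL.l1 t (pre β n)))) ↔ t ∈ Gᶜ) := by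
  have hgood (β : ℕ → Fin 2) := infOften_rankL_runL_iff_good (q := .l1) (by decide) t β
  have hparity (β : ℕ → Fin 2) :=
    parityOk_iff_not_infOften_one (g := fun n => rankL (runL QL.l1 t (pre β n)))
      fun n => rankL_le_one _
  refine ⟨exists_congr hgood, ?_⟩
  simp only [hparity, hgood, G, Set.mem_compl_iff, Set.mem_ofPred_eq, not_exists]
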